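/- Conservation of the second invariant (Hamiltonian): let γ1 > 0, δ1 > 0, γ2, δ2 be real constants and γ = 7/48, and let η : ℝ × [0,T] → ℝ be a smooth solution of the fifth-order KdV–BBM equation such that x ↦ η(x,t) is a Schwartz function for each t and t ↦ η(·,t) is smooth into the Schwartz space. Then the functional Θ(η(·,t)) := (1/2) ∫_ℝ ( −η² − (1/2)η³ + (1/16)η⁴ + (7/24) η η_x² + γ2 η_x² − δ2 η_{xx}² ) dx is independent of t ∈ [0,T]. -/

import Mathlib

/-!
`Θ(η) = ½ ∫ θ(η)` with `θ` a polynomial in `η, ∂ₓη, ∂ₓ²η`, so `dΘ/dt = ½ ∫ θ'(η)[η_t]`, and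
integrating by parts, `θ'(η)[η_t] = -2 g η_t + ∂ₓ(…)`, where the equation reads
`(1 - γ1 ∂ₓ² + δ1 ∂ₓ⁴) η_t + ∂ₓ g = 0`. With `Φ = γ1 ∂ₓη_t - δ1 ∂ₓ³η_t - g` the equation says
`∂ₓΦ = η_t`, so `g η_t = (γ1 ∂ₓη_t - δ1 ∂ₓ³η_t - Φ) ∂ₓΦ` is the derivative of
`γ1 η_t² / 2 - δ1 (η_t ∂ₓ²η_t - (∂ₓη_t)² / 2) - Φ² / 2`, again a Schwartz function.
Hence `dΘ/dt = 0`.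
-/

noncomputable section

open MeasureTheory Real Set Filter Topology
open scoped BoundedContinuousFunction

local notation "𝓢ℝ" => SchwartzMap ℝ ℝ
local notation "∂" => SchwartzMap.derivCLM ℝ ℝ
local notation "ι" => SchwartzMap.toBoundedContinuousFunctionCLM ℝ ℝ ℝ
local infixl:70 " ⋆ " => SchwartzMap.pairing (ContinuousLinearMap.mul ℝ ℝ)

theorem hasDerivWithinAt_clm_comp_of_tendsto_slope {V E : Type*} [AddCommGroup V] [Module ℝ V]
    [TopologicalSpace V] [NormedAddCommGroup E] [NormedSpace ℝ E] (A : V →L[ℝ] E)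
    {c : ℝ → V} {c' : V} {s : Set ℝ} {t : ℝ}
    (hc : Tendsto (fun h : ℝ => h⁻¹ • (c (t + h) - c t)) (𝓝[{h | h ≠ 0 ∧ t + h ∈ s}] 0) (𝓝 c')) :
    HasDerivWithinAt (fun τ => A (c τ)) (A c') s t := by
  rw [hasDerivWithinAt_iff_tendsto_slope]
  have hshift : Tendsto (fun τ : ℝ => τ - t) (𝓝[s \ {t}] t) (𝓝[{h | h ≠ 0 ∧ t + h ∈ s}] 0) := by
    refine tendsto_nhdsWithin_of_tendsto_nhds_of_eventually_within _ ?_ ?_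
    · simpa using (tendsto_id.sub_const t).mono_left (nhdsWithin_le_nhds (a := t) (s := s \ {t}))
    · filter_upwards [self_mem_nhdsWithin] with τ hτ
      exact ⟨sub_ne_zero.2 hτ.2, by simpa using hτ.1⟩
  refine (((A.continuous.tendsto c').comp hc).comp hshift).congr fun τ => ?_
  simp [slope_def_module]

namespace BoundedContinuousFunction

theorem integrable_mul_inv_one_add_sq (h : ℝ →ᵇ ℝ) :
    Integrable (fun x => h x * (1 + x ^ 2)⁻¹) :=
  integrable_inv_one_add_sq.bdd_mul h.continuous.aestronglyMeasurable
    (.of_forall h.norm_coe_le_norm)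

def weightedIntegralCLM : (ℝ →ᵇ ℝ) →L[ℝ] ℝ :=
  LinearMap.mkContinuous
    { toFun := fun h => ∫ x, h x * (1 + x ^ 2)⁻¹
      map_add' := fun g h => by
        simp only [coe_add, Pi.add_apply, add_mul]
        exact integral_add (integrable_mul_inv_one_add_sq g) (integrable_mul_inv_one_add_sq h)
      map_smul' := fun c h => by
        simp only [coe_smul, smul_eq_mul, mul_assoc, RingHom.id_apply]
        exact integral_const_mul c _ }
    π fun h => by
      calc ‖∫ x, h x * (1 + x ^ 2)⁻¹‖ ≤ ∫ x, ‖h‖ * (1 + x ^ 2)⁻¹ := by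
            refine norm_integral_le_of_norm_le (integrable_inv_one_add_sq.const_mul _)
              (.of_forall fun x => ?_)
            rw [norm_mul, norm_of_nonneg (r := (1 + x ^ 2)⁻¹) (by positivity)]
            gcongr
            exact h.norm_coe_le_norm x
        _ = π * ‖h‖ := by rw [integral_const_mul, integral_univ_inv_one_add_sq, mul_comm]

@[simp]
theorem weightedIntegralCLM_apply (h : ℝ →ᵇ ℝ) :
    weightedIntegralCLM h = ∫ x, h x * (1 + x ^ 2)⁻¹ :=
  rfl

end BoundedContinuousFunction

namespace SchwartzMap

open BoundedContinuousFunction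

theorem pairing_mul_apply (f g : 𝓢ℝ) (x : ℝ) : (f ⋆ g) x = f x * g x :=
  rfl

theorem derivCLM_pairing_mul (f g : 𝓢ℝ) : ∂ (f ⋆ g) = ∂ f ⋆ g + f ⋆ ∂ g := by
  ext x
  exact ((f.hasDerivAt x).mul (g.hasDerivAt x)).deriv

theorem integral_derivCLM (f : 𝓢ℝ) : ∫ x, ∂ f x = 0 := by
  have h := f.tendsto_cocompact
  simpa using integral_of_hasDerivAt_of_tendsto f.hasDerivAt (∂ f).integrable
    (h.mono_left atBot_le_cocompact) (h.mono_left atTop_le_cocompact)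

theorem iteratedDeriv_eq_iterate_derivCLM (f : 𝓢ℝ) (n : ℕ) :
    iteratedDeriv n f = ⇑(∂^[n] f) := by
  induction n with
  | zero => simp
  | succ n ih =>
    ext x
    rw [iteratedDeriv_succ, ih, Function.iterate_succ_apply', derivCLM_apply]

def weightedBCFCLM : 𝓢ℝ →L[ℝ] (ℝ →ᵇ ℝ) := ι ∘L smulLeftCLM ℝ (fun x : ℝ => 1 + x ^ 2)

@[simp]
theorem weightedBCFCLM_apply (f : 𝓢ℝ) (x : ℝ) : weightedBCFCLM f x = (1 + x ^ 2) * f x := by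
  have : (fun x : ℝ => 1 + x ^ 2).HasTemperateGrowth := by fun_prop
  simp [weightedBCFCLM, smulLeftCLM_apply_apply this]

theorem integral_eq_weightedIntegralCLM (f : 𝓢ℝ) :
    ∫ x, f x = weightedIntegralCLM (weightedBCFCLM f) := by
  simp only [weightedIntegralCLM_apply, weightedBCFCLM_apply]
  congr 1 with x
  field_simp

theorem toBoundedContinuousFunctionCLM_pairing_mul (f g : 𝓢ℝ) : ι (f ⋆ g) = ι f * ι g := by
  ext; simp

theorem weightedBCFCLM_pairing_mul (f g : 𝓢ℝ) :
    weightedBCFCLM (f ⋆ g) = weightedBCFCLM f * ι g := by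
  ext; simp [mul_assoc]

/-- Differentiability of a curve of Schwartz functions in the norms `‖(1 + x²) f‖_∞` and `‖f‖_∞`:
weak enough for pointwise products to obey the Leibniz rule in the Banach algebra `ℝ →ᵇ ℝ`, strong
enough to differentiate `∫ f = ∫ (1 + x²) f x · (1 + x²)⁻¹ dx`. -/
structure HasWeightedSupDerivWithinAt (c : ℝ → 𝓢ℝ) (c' : 𝓢ℝ) (s : Set ℝ) (t : ℝ) : Prop where
  weighted : HasDerivWithinAt (fun τ => weightedBCFCLM (c τ)) (weightedBCFCLM c') s t
  bounded : HasDerivWithinAt (fun τ => ι (c τ)) (ι c') s t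

namespace HasWeightedSupDerivWithinAt

variable {c d : ℝ → 𝓢ℝ} {c' d' : 𝓢ℝ} {s : Set ℝ} {t : ℝ}

theorem of_tendsto_slope (L : 𝓢ℝ →L[ℝ] 𝓢ℝ)
    (hc : Tendsto (fun h : ℝ => h⁻¹ • (c (t + h) - c t)) (𝓝[{h | h ≠ 0 ∧ t + h ∈ s}] 0) (𝓝 c')) :
    HasWeightedSupDerivWithinAt (fun τ => L (c τ)) (L c') s t :=
  ⟨hasDerivWithinAt_clm_comp_of_tendsto_slope (weightedBCFCLM ∘L L) hc,
    hasDerivWithinAt_clm_comp_of_tendsto_slope (ι ∘L L) hc⟩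

theorem add (hc : HasWeightedSupDerivWithinAt c c' s t)
    (hd : HasWeightedSupDerivWithinAt d d' s t) :
    HasWeightedSupDerivWithinAt (fun τ => c τ + d τ) (c' + d') s t :=
  ⟨by simp only [map_add]; exact hc.weighted.add hd.weighted,
    by simp only [map_add]; exact hc.bounded.add hd.bounded⟩

theorem sub (hc : HasWeightedSupDerivWithinAt c c' s t)
    (hd : HasWeightedSupDerivWithinAt d d' s t) :
    HasWeightedSupDerivWithinAt (fun τ => c τ - d τ) (c' - d') s t :=
  ⟨by simp only [map_sub]; exact hc.weighted.sub hd.weighted,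
    by simp only [map_sub]; exact hc.bounded.sub hd.bounded⟩

theorem const_smul (a : ℝ) (hc : HasWeightedSupDerivWithinAt c c' s t) :
    HasWeightedSupDerivWithinAt (fun τ => a • c τ) (a • c') s t :=
  ⟨by simp only [map_smul]; exact hc.weighted.const_smul a,
    by simp only [map_smul]; exact hc.bounded.const_smul a⟩

theorem mul (hc : HasWeightedSupDerivWithinAt c c' s t)
    (hd : HasWeightedSupDerivWithinAt d d' s t) :
    HasWeightedSupDerivWithinAt (fun τ => c τ ⋆ d τ) (c' ⋆ d t + c t ⋆ d') s t :=
  ⟨by simp only [weightedBCFCLM_pairing_mul, map_add]; exact hc.weighted.mul hd.bounded,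
    by simp only [toBoundedContinuousFunctionCLM_pairing_mul, map_add]
       exact hc.bounded.mul hd.bounded⟩

theorem hasDerivWithinAt_integral (hc : HasWeightedSupDerivWithinAt c c' s t) :
    HasDerivWithinAt (fun τ => ∫ x, c τ x) (∫ x, c' x) s t := by
  simp only [integral_eq_weightedIntegralCLM]
  exact weightedIntegralCLM.hasFDerivAt.comp_hasDerivWithinAt t hc.weighted

end HasWeightedSupDerivWithinAt

end SchwartzMap

namespace KdVBBM

open SchwartzMap

def hamiltonianDensity (γ2 δ2 : ℝ) (u : 𝓢ℝ) : 𝓢ℝ :=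
  -(u ⋆ u) - (1 / 2 : ℝ) • (u ⋆ u ⋆ u) + (1 / 16 : ℝ) • (u ⋆ u ⋆ u ⋆ u)
    + (7 / 24 : ℝ) • (u ⋆ ∂ u ⋆ ∂ u) + γ2 • (∂ u ⋆ ∂ u) - δ2 • (∂ (∂ u) ⋆ ∂ (∂ u))

/-- `d/dε hamiltonianDensity γ2 δ2 (u + ε ψ)` at `ε = 0`. -/
def hamiltonianDensityVariation (γ2 δ2 : ℝ) (u ψ : 𝓢ℝ) : 𝓢ℝ :=
  -(2 : ℝ) • (u ⋆ ψ) - (3 / 2 : ℝ) • (u ⋆ u ⋆ ψ) + (1 / 4 : ℝ) • (u ⋆ u ⋆ u ⋆ ψ)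
    + (7 / 24 : ℝ) • (ψ ⋆ ∂ u ⋆ ∂ u + (2 : ℝ) • (u ⋆ ∂ u ⋆ ∂ ψ))
    + (2 * γ2) • (∂ u ⋆ ∂ ψ) - (2 * δ2) • (∂ (∂ u) ⋆ ∂ (∂ ψ))

/-- With `γ = 7/48`, the KdV–BBM equation reads
`η_t - γ1 ∂ₓ²η_t + δ1 ∂ₓ⁴η_t + ∂ₓ (bbmFlux γ2 δ2 η) = 0`. -/
def bbmFlux (γ2 δ2 : ℝ) (u : 𝓢ℝ) : 𝓢ℝ :=
  u + γ2 • ∂ (∂ u) + δ2 • ∂ (∂ (∂ (∂ u))) + (3 / 4 : ℝ) • (u ⋆ u) + (7 / 48 : ℝ) • ∂ (∂ (u ⋆ u))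
    - (7 / 48 : ℝ) • (∂ u ⋆ ∂ u) - (1 / 8 : ℝ) • (u ⋆ u ⋆ u)

theorem hamiltonianDensity_apply (γ2 δ2 : ℝ) (u : 𝓢ℝ) (x : ℝ) :
    hamiltonianDensity γ2 δ2 u x =
      -(u x ^ 2) - (1 / 2) * u x ^ 3 + (1 / 16) * u x ^ 4
        + (7 / 24) * u x * (deriv (fun y => u y) x) ^ 2
        + γ2 * (deriv (fun y => u y) x) ^ 2
        - δ2 * (iteratedDeriv 2 (fun y => u y) x) ^ 2 := by
  simp only [hamiltonianDensity, iteratedDeriv_eq_iterate_derivCLM, Function.iterate_succ_apply',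
    Function.iterate_zero_apply, derivCLM_apply, sub_apply, add_apply, neg_apply, smul_apply,
    smul_eq_mul, pairing_mul_apply]
  ring

theorem derivCLM_bbmFlux_apply (γ2 δ2 : ℝ) (u : 𝓢ℝ) (x : ℝ) :
    ∂ (bbmFlux γ2 δ2 u) x =
      deriv (fun y => u y) x + γ2 * iteratedDeriv 3 (fun y => u y) x
        + δ2 * iteratedDeriv 5 (fun y => u y) x
        + (3 / 4) * deriv (fun y => u y ^ 2) x
        + (7 / 48) * iteratedDeriv 3 (fun y => u y ^ 2) x
        - (7 / 48) * deriv (fun y => (deriv (fun z => u z) y) ^ 2) x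
        - (1 / 8) * deriv (fun y => u y ^ 3) x := by
  have h2 : (fun y => u y ^ 2) = ⇑(u ⋆ u) := by ext; simp [sq]
  have h3 : (fun y => u y ^ 3) = ⇑(u ⋆ u ⋆ u) := by ext; simp [pow_succ]
  have h2' : (fun y => deriv (fun z => u z) y ^ 2) = ⇑(∂ u ⋆ ∂ u) := by ext; simp [sq]
  rw [h2, h3, h2']
  simp [bbmFlux, iteratedDeriv_eq_iterate_derivCLM]

theorem hasDerivWithinAt_integral_hamiltonianDensity (γ2 δ2 : ℝ) {η : ℝ → 𝓢ℝ} {ψ : 𝓢ℝ}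
    {s : Set ℝ} {t : ℝ}
    (hη : Tendsto (fun h : ℝ => h⁻¹ • (η (t + h) - η t)) (𝓝[{h | h ≠ 0 ∧ t + h ∈ s}] 0) (𝓝 ψ)) :
    HasDerivWithinAt (fun τ => ∫ x, hamiltonianDensity γ2 δ2 (η τ) x)
      (∫ x, hamiltonianDensityVariation γ2 δ2 (η t) ψ x) s t := by
  have h0 := HasWeightedSupDerivWithinAt.of_tendsto_slope (.id ℝ _) hη
  have h1 := HasWeightedSupDerivWithinAt.of_tendsto_slope ∂ hη
  have h2 := HasWeightedSupDerivWithinAt.of_tendsto_slope (∂ ∘L ∂) hη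
  simp only [ContinuousLinearMap.id_apply, ContinuousLinearMap.comp_apply] at h0 h2
  have H := (((((h0.mul h0).const_smul (-1)).sub (((h0.mul h0).mul h0).const_smul (1 / 2))).add
    ((((h0.mul h0).mul h0).mul h0).const_smul (1 / 16))).add
    (((h0.mul h1).mul h1).const_smul (7 / 24))).add
    ((h1.mul h1).const_smul γ2) |>.sub ((h2.mul h2).const_smul δ2)
  convert H.hasDerivWithinAt_integral using 1
  · ext τ; congr 1 with x; simp [hamiltonianDensity]
  · congr 1 with x
    simp only [hamiltonianDensityVariation, map_add, sub_apply, add_apply, smul_apply, smul_eq_mul,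
      pairing_mul_apply]
    ring

theorem integral_hamiltonianDensityVariation (γ2 δ2 : ℝ) (u ψ : 𝓢ℝ) :
    ∫ x, hamiltonianDensityVariation γ2 δ2 u ψ x = -2 * ∫ x, (bbmFlux γ2 δ2 u ⋆ ψ) x := by
  set F : 𝓢ℝ := (7 / 12 : ℝ) • (u ⋆ ∂ u ⋆ ψ) + (2 * γ2) • (∂ u ⋆ ψ)
    - (2 * δ2) • (∂ (∂ u) ⋆ ∂ ψ - ∂ (∂ (∂ u)) ⋆ ψ)
  have hF : ⇑(hamiltonianDensityVariation γ2 δ2 u ψ) =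
      fun x => -2 * (bbmFlux γ2 δ2 u ⋆ ψ) x + ∂ F x := by
    ext x
    simp only [F, hamiltonianDensityVariation, bbmFlux, derivCLM_pairing_mul, map_add, map_sub,
      map_smul, sub_apply, add_apply, smul_apply, smul_eq_mul, pairing_mul_apply]
    ring
  rw [hF, integral_add ((bbmFlux γ2 δ2 u ⋆ ψ).integrable.const_mul _) (∂ F).integrable,
    integral_const_mul, integral_derivCLM, add_zero]

theorem integral_pairing_mul_eq_zero_of_derivCLM_eq (γ1 δ1 : ℝ) {g ψ : 𝓢ℝ}
    (h : ∂ g = -(ψ - γ1 • ∂ (∂ ψ) + δ1 • ∂ (∂ (∂ (∂ ψ))))) :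
    ∫ x, (g ⋆ ψ) x = 0 := by
  set Φ : 𝓢ℝ := γ1 • ∂ ψ - δ1 • ∂ (∂ (∂ ψ)) - g
  have hΦ : ∂ Φ = ψ := by
    simp only [Φ, map_sub, map_smul, h]
    abel
  have hgψ : g ⋆ ψ = ∂ ((γ1 / 2) • (ψ ⋆ ψ) - δ1 • (∂ (∂ ψ) ⋆ ψ - (1 / 2 : ℝ) • (∂ ψ ⋆ ∂ ψ))
      - (1 / 2 : ℝ) • (Φ ⋆ Φ)) := by
    simp only [map_sub, map_smul, derivCLM_pairing_mul, hΦ]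
    ext x
    simp only [Φ, map_sub, map_smul, sub_apply, add_apply, smul_apply, smul_eq_mul,
      pairing_mul_apply]
    ring
  rw [hgψ]
  exact integral_derivCLM _

end KdVBBM

open KdVBBM SchwartzMap

theorem second_invariant_conservation_general (γ1 δ1 γ2 δ2 T : ℝ)
    (η : ℝ → SchwartzMap ℝ ℝ) (D : ℕ → ℝ → SchwartzMap ℝ ℝ) (hD0 : D 0 = η)
    (hDdiff : ∀ n : ℕ, ∀ t ∈ Icc (0 : ℝ) T,
      Tendsto (fun h : ℝ => h⁻¹ • (D n (t + h) - D n t))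
        (nhdsWithin 0 {h : ℝ | h ≠ 0 ∧ t + h ∈ Icc (0 : ℝ) T}) (nhds (D (n + 1) t)))
    -- `η` solves the fifth-order KdV–BBM equation with `γ = 7/48` on `ℝ × [0,T]`:
    (heq : ∀ t ∈ Icc (0 : ℝ) T, ∀ x : ℝ,
      D 1 t x + deriv (fun y => η t y) x
        - γ1 * iteratedDeriv 2 (fun y => D 1 t y) x
        + γ2 * iteratedDeriv 3 (fun y => η t y) x
        + δ1 * iteratedDeriv 4 (fun y => D 1 t y) x
        + δ2 * iteratedDeriv 5 (fun y => η t y) x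
        + (3 / 4) * deriv (fun y => η t y ^ 2) x
        + (7 / 48) * iteratedDeriv 3 (fun y => η t y ^ 2) x
        - (7 / 48) * deriv (fun y => (deriv (fun z => η t z) y) ^ 2) x
        - (1 / 8) * deriv (fun y => η t y ^ 3) x = 0) :
    -- conclusion: conservation of the Hamiltonian Θ
    ∀ t ∈ Icc (0 : ℝ) T,
      (1 / 2) * (∫ x : ℝ,
          (-(η t x ^ 2) - (1 / 2) * η t x ^ 3 + (1 / 16) * η t x ^ 4
            + (7 / 24) * η t x * (deriv (fun y => η t y) x) ^ 2
            + γ2 * (deriv (fun y => η t y) x) ^ 2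
            - δ2 * (iteratedDeriv 2 (fun y => η t y) x) ^ 2)) =
        (1 / 2) * ∫ x : ℝ,
          (-(η 0 x ^ 2) - (1 / 2) * η 0 x ^ 3 + (1 / 16) * η 0 x ^ 4
            + (7 / 24) * η 0 x * (deriv (fun y => η 0 y) x) ^ 2
            + γ2 * (deriv (fun y => η 0 y) x) ^ 2
            - δ2 * (iteratedDeriv 2 (fun y => η 0 y) x) ^ 2) := by
  have hflux : ∀ τ ∈ Icc (0 : ℝ) T, ∂ (bbmFlux γ2 δ2 (η τ))
      = -(D 1 τ - γ1 • ∂ (∂ (D 1 τ)) + δ1 • ∂ (∂ (∂ (∂ (D 1 τ))))) := fun τ hτ => by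
    ext x
    have hx := heq τ hτ x
    rw [derivCLM_bbmFlux_apply]
    simp only [neg_apply, add_apply, sub_apply, smul_apply, smul_eq_mul,
      iteratedDeriv_eq_iterate_derivCLM, Function.iterate_succ_apply',
      Function.iterate_zero_apply] at hx ⊢
    linear_combination hx
  have hderiv : ∀ τ ∈ Icc (0 : ℝ) T,
      HasDerivWithinAt (fun τ => ∫ x, hamiltonianDensity γ2 δ2 (η τ) x) 0 (Icc 0 T) τ :=
    fun τ hτ => by
      have h := hasDerivWithinAt_integral_hamiltonianDensity γ2 δ2 (hD0 ▸ hDdiff 0 τ hτ)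
      rwa [integral_hamiltonianDensityVariation,
        integral_pairing_mul_eq_zero_of_derivCLM_eq γ1 δ1 (hflux τ hτ), mul_zero] at h
  intro t ht
  simp only [← hamiltonianDensity_apply]
  congr 1
  exact constant_of_has_deriv_right_zero (fun τ hτ => (hderiv τ hτ).continuousWithinAt)
    (fun τ hτ => (hderiv τ (Ico_subset_Icc_self hτ)).mono_of_mem_nhdsWithin
      (Icc_mem_nhdsGE_of_mem hτ)) t ht

theorem second_invariant_conservation (γ1 δ1 γ2 δ2 T : ℝ) (hγ1 : 0 < γ1)
    (hδ1 : 0 < δ1) (hT : 0 < T)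
    (η : ℝ → SchwartzMap ℝ ℝ) (D : ℕ → ℝ → SchwartzMap ℝ ℝ) (hD0 : D 0 = η)
    (hDdiff : ∀ n : ℕ, ∀ t ∈ Icc (0 : ℝ) T,
      Tendsto (fun h : ℝ => h⁻¹ • (D n (t + h) - D n t))
        (nhdsWithin 0 {h : ℝ | h ≠ 0 ∧ t + h ∈ Icc (0 : ℝ) T}) (nhds (D (n + 1) t)))
    -- `η` solves the fifth-order KdV–BBM equation with `γ = 7/48` on `ℝ × [0,T]`:
    (heq : ∀ t ∈ Icc (0 : ℝ) T, ∀ x : ℝ,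
      D 1 t x + deriv (fun y => η t y) x
        - γ1 * iteratedDeriv 2 (fun y => D 1 t y) x
        + γ2 * iteratedDeriv 3 (fun y => η t y) x
        + δ1 * iteratedDeriv 4 (fun y => D 1 t y) x
        + δ2 * iteratedDeriv 5 (fun y => η t y) x
        + (3 / 4) * deriv (fun y => η t y ^ 2) x
        + (7 / 48) * iteratedDeriv 3 (fun y => η t y ^ 2) x
        - (7 / 48) * deriv (fun y => (deriv (fun z => η t z) y) ^ 2) x
        - (1 / 8) * deriv (fun y => η t y ^ 3) x = 0) :
    -- conclusion: conservation of the Hamiltonian Θ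
    ∀ t ∈ Icc (0 : ℝ) T,
      (1 / 2) * (∫ x : ℝ,
          (-(η t x ^ 2) - (1 / 2) * η t x ^ 3 + (1 / 16) * η t x ^ 4
            + (7 / 24) * η t x * (deriv (fun y => η t y) x) ^ 2
            + γ2 * (deriv (fun y => η t y) x) ^ 2
            - δ2 * (iteratedDeriv 2 (fun y => η t y) x) ^ 2)) =
        (1 / 2) * ∫ x : ℝ,
          (-(η 0 x ^ 2) - (1 / 2) * η 0 x ^ 3 + (1 / 16) * η 0 x ^ 4
            + (7 / 24) * η 0 x * (deriv (fun y => η 0 y) x) ^ 2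
            + γ2 * (deriv (fun y => η 0 y) x) ^ 2
            - δ2 * (iteratedDeriv 2 (fun y => η 0 y) x) ^ 2) :=
  second_invariant_conservation_general γ1 δ1 γ2 δ2 T η D hD0 hDdiff heq
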